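/- arXiv:1912.04213 — 3 statements merged into one kernel-verified Lean document; each statement's English description precedes it below -/
import Mathlib

section
/- Let T be a symmetric bilinear form on a Lorentzian 4-space satisfying the Null Energy Condition T(k,k) ≥ 0 for all null vectors k. Let u be unit timelike, n unit timelike with γ = -g(n,u), and suppose the heat flux q := -b(T(u,·)) vanishes, where b is projection orthogonal to u. Writing ε := T(u,u), p := (1/3)·trace of T restricted orthogonal to u, π the trace-free orthogonal part, and v the tilt vector with u = γ(n+v), one has (γ²-1)(ε+p) + π(v,v) ≥ 0. Hence T(n,n) - T(u,u) ≥ 0. -/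
/-!
Write `w := γ u - n`, the part of `n` orthogonal to `u` (up to sign), so that `g(w,w) = γ² - 1`
and `n = γ u - w`. For a `u`-orthogonal `w` and any `a`, the `q = 0` form of `T` gives
`T(a u + w, a u + w) = ε a² + p g(w,w) + π(w,w)`. With `a = γ` this computes
`T(n,n) - T(u,u) = (γ² - 1)(ε + p) + π(v,v)` (`π` ignores `u`-components, so
`π(w,w) = π(n,n) = π(v,v)`), while with `a = √(γ² - 1)` the vector `a u + w`
is null, and the Null Energy Condition makes the same quantity nonnegative.
-/

section StressEnergy

variable {V : Type*} [AddCommGroup V] [Module ℝ V]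

theorem bilin_smul_add_self_of_apply_left_eq_zero {B : V →ₗ[ℝ] V →ₗ[ℝ] ℝ}
    (hBsymm : ∀ x y, B x y = B y x) {u : V} (hBu : ∀ x, B u x = 0) (a : ℝ) (x : V) :
    B (a • u + x) (a • u + x) = B x x := by
  simp [hBu, hBsymm x u]

variable {g : V →ₗ[ℝ] V →ₗ[ℝ] ℝ} {u w : V}

theorem metric_smul_add_self (hgsymm : ∀ x y, g x y = g y x) (huu : g u u = -1)
    (hw : g u w = 0) (a : ℝ) :
    g (a • u + w) (a • u + w) = -a ^ 2 + g w w := by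
  simp only [map_add, map_smul, LinearMap.add_apply, LinearMap.smul_apply, smul_eq_mul, huu, hw,
    hgsymm w u]
  ring

theorem stressEnergy_smul_add_self {T π : V →ₗ[ℝ] V →ₗ[ℝ] ℝ} {ε p : ℝ}
    (hgsymm : ∀ x y, g x y = g y x) (huu : g u u = -1)
    (hπsymm : ∀ x y, π x y = π y x) (hπu : ∀ x, π u x = 0)
    (hT : ∀ x y, T x y = ε * (g u x) * (g u y) + p * (g x y + (g u x) * (g u y)) + π x y)
    (hw : g u w = 0) (a : ℝ) :
    T (a • u + w) (a • u + w) = ε * a ^ 2 + p * g w w + π w w := by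
  have hgu : g u (a • u + w) = -a := by simp [huu, hw]
  rw [hT, hgu, metric_smul_add_self hgsymm huu hw,
    bilin_smul_add_self_of_apply_left_eq_zero hπsymm hπu]
  ring

theorem null_energy_condition_of_orthogonal {T π : V →ₗ[ℝ] V →ₗ[ℝ] ℝ} {ε p : ℝ}
    (hgsymm : ∀ x y, g x y = g y x) (huu : g u u = -1)
    (hπsymm : ∀ x y, π x y = π y x) (hπu : ∀ x, π u x = 0)
    (hT : ∀ x y, T x y = ε * (g u x) * (g u y) + p * (g x y + (g u x) * (g u y)) + π x y)
    (hNEC : ∀ k, g k k = 0 → 0 ≤ T k k) (hw : g u w = 0) (hww : 0 ≤ g w w) :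
    0 ≤ (ε + p) * g w w + π w w := by
  have hsq : √(g w w) ^ 2 = g w w := Real.sq_sqrt hww
  have hnull : g (√(g w w) • u + w) (√(g w w) • u + w) = 0 := by
    rw [metric_smul_add_self hgsymm huu hw, hsq, neg_add_cancel]
  have := hNEC _ hnull
  rwa [stressEnergy_smul_add_self hgsymm huu hπsymm hπu hT hw, hsq, ← add_mul] at this

end StressEnergy

theorem NEC_tilt_energy_difference_general {V : Type*} [AddCommGroup V] [Module ℝ V]
    (g T π : V →ₗ[ℝ] V →ₗ[ℝ] ℝ)
    (hgsymm : ∀ x y, g x y = g y x)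
    (u n v : V) (γ ε p : ℝ)
    (huu : g u u = -1) (hnn : g n n = -1)
    (hγ : γ = -(g n u)) (hγ1 : 1 ≤ γ)
    (hu : u = γ • (n + v))
    (hπsymm : ∀ x y, π x y = π y x) (hπu : ∀ x, π u x = 0)
    (hT : ∀ x y, T x y = ε * (g u x) * (g u y)
          + p * (g x y + (g u x) * (g u y)) + π x y)
    (hNEC : ∀ k, g k k = 0 → 0 ≤ T k k) :
    0 ≤ (γ ^ 2 - 1) * (ε + p) + π v v ∧ 0 ≤ T n n - T u u := by
  have hgnu : g n u = -γ := by linarith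
  set w := γ • u - n
  have hwu : g u w = 0 := by simp [w, huu, hgsymm u n, hgnu]
  have hww : g w w = γ ^ 2 - 1 := by
    simp only [w, map_sub, map_smul, LinearMap.sub_apply, LinearMap.smul_apply, smul_eq_mul, huu,
      hnn, hgsymm u n, hgnu]
    ring
  have hπww : π w w = π v v := by
    have hn' : n = γ⁻¹ • u + -v := by
      rw [hu, smul_smul, inv_mul_cancel₀ (by positivity), one_smul]
      abel
    calc π w w = π n n := by
          rw [show w = γ • u + -n from sub_eq_add_neg _ _,
            bilin_smul_add_self_of_apply_left_eq_zero hπsymm hπu]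
          simp
      _ = π v v := by
          rw [hn', bilin_smul_add_self_of_apply_left_eq_zero hπsymm hπu]
          simp
  have hgap : T n n - T u u = (γ ^ 2 - 1) * (ε + p) + π v v := by
    have hTu : T u u = ε := by simp [hT, huu, hπu]
    have hTn := stressEnergy_smul_add_self hgsymm huu hπsymm hπu hT (w := -w) (by simp [hwu]) γ
    rw [show γ • u + -w = n by simp [w]] at hTn
    simp only [map_neg, LinearMap.neg_apply, neg_neg] at hTn
    rw [hTn, hTu, hww, hπww]
    ring
  have hgap_nonneg : 0 ≤ (γ ^ 2 - 1) * (ε + p) + π v v := by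
    have := null_energy_condition_of_orthogonal hgsymm huu hπsymm hπu hT hNEC hwu
      (by rw [hww]; nlinarith)
    rwa [hww, hπww, mul_comm] at this
  exact ⟨hgap_nonneg, hgap ▸ hgap_nonneg⟩

/-- For a stress-energy tensor `T = ε u⊗u + p·b + π` (vanishing heat flux `q = 0`,
`π` symmetric and `u`-orthogonal) satisfying the Null Energy Condition, and a tilted
unit normal `n` with `u = γ(n+v)`, `g(n,v) = 0`, `g(v,v) = 1 - 1/γ²`, one has
`(γ²-1)(ε+p) + π(v,v) ≥ 0`, hence `T(n,n) - T(u,u) ≥ 0`. -/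
theorem NEC_tilt_energy_difference {V : Type*} [AddCommGroup V] [Module ℝ V]
    (g T π : V →ₗ[ℝ] V →ₗ[ℝ] ℝ)
    (hgsymm : ∀ x y, g x y = g y x)
    (u n v : V) (γ ε p : ℝ)
    (huu : g u u = -1) (hnn : g n n = -1)
    (hγ : γ = -(g n u)) (hγ1 : 1 ≤ γ)
    (hu : u = γ • (n + v)) (hnv : g n v = 0) (hvv : g v v = 1 - 1 / γ ^ 2)
    (hπsymm : ∀ x y, π x y = π y x) (hπu : ∀ x, π u x = 0)
    (hT : ∀ x y, T x y = ε * (g u x) * (g u y)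
          + p * (g x y + (g u x) * (g u y)) + π x y)
    (hNEC : ∀ k, g k k = 0 → 0 ≤ T k k) :
    0 ≤ (γ ^ 2 - 1) * (ε + p) + π v v ∧ 0 ≤ T n n - T u u :=
  NEC_tilt_energy_difference_general g T π hgsymm u n v γ ε p huu hnn hγ hγ1 hu hπsymm hπu hT hNEC
end

section
/- Suppose a, Q, W, P, ε, p : ℝ → ℝ are differentiable with a > 0, H := a'/a, and they satisfy the two averaged equations: 3(a''/a) = -4πG(ε + 3p) + Λ + Q + P and 3H² = 8πGε + Λ - Q/2 - W/2 (with W here denoting ⟨R⟩, the averaged curvature). Then differentiating the second equation and substituting yields the integrability condition: Q' + 6HQ + W' + 2HW + 4HP = 16πG(ε' + 3H(ε + p)). -/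
/-! Differentiating the Hamiltonian constraint `3H² = 8πGε + Λ - Q/2 - W/2` gives
`6H(a''/a - H²) = 8πGε' - Q'/2 - W'/2`, since `H' = a''/a - H²`. Eliminating `a''/a` with the
Raychaudhuri equation and `H²` with the constraint itself leaves the integrability condition. -/

theorem hasDerivAt_deriv_div_self {𝕜 : Type*} [NontriviallyNormedField 𝕜] {f : 𝕜 → 𝕜} {t : 𝕜}
    (hf : DifferentiableAt 𝕜 f t) (hf' : DifferentiableAt 𝕜 (deriv f) t) (ht : f t ≠ 0) :
    HasDerivAt (fun s => deriv f s / f s) (deriv (deriv f) t / f t - (deriv f t / f t) ^ 2) t := by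
  refine (hf'.hasDerivAt.div hf.hasDerivAt ht).congr_deriv ?_
  field_simp

theorem deriv_hamiltonian_constraint (G Λ : ℝ) (a Q W ε : ℝ → ℝ) (t : ℝ)
    (ha : DifferentiableAt ℝ a t) (ha' : DifferentiableAt ℝ (deriv a) t)
    (hQ : DifferentiableAt ℝ Q t) (hW : DifferentiableAt ℝ W t) (hε : DifferentiableAt ℝ ε t)
    (hat : a t ≠ 0)
    (hconstraint : ∀ s, 3 * (deriv a s / a s) ^ 2
      = 8 * Real.pi * G * ε s + Λ - Q s / 2 - W s / 2) :
    6 * (deriv a t / a t) * (deriv (deriv a) t / a t - (deriv a t / a t) ^ 2)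
      = 8 * Real.pi * G * deriv ε t - deriv Q t / 2 - deriv W t / 2 := by
  have hlhs : HasDerivAt (fun s => 3 * (deriv a s / a s) ^ 2)
      (6 * (deriv a t / a t) * (deriv (deriv a) t / a t - (deriv a t / a t) ^ 2)) t := by
    refine (((hasDerivAt_deriv_div_self ha ha' hat).pow 2).const_mul 3).congr_deriv ?_
    push_cast
    ring
  have hrhs : HasDerivAt (fun s => 8 * Real.pi * G * ε s + Λ - Q s / 2 - W s / 2)
      (8 * Real.pi * G * deriv ε t - deriv Q t / 2 - deriv W t / 2) t :=
    (((hε.hasDerivAt.const_mul _).add_const Λ).sub (hQ.hasDerivAt.div_const 2)).sub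
      (hW.hasDerivAt.div_const 2)
  rw [funext hconstraint] at hlhs
  exact hlhs.unique hrhs

theorem integrability_condition_general (G Λ : ℝ) (a Q W P ε p : ℝ → ℝ)
    (ha : Differentiable ℝ a) (ha' : Differentiable ℝ (deriv a))
    (hQ : Differentiable ℝ Q) (hW : Differentiable ℝ W)
    (hε : Differentiable ℝ ε)
    (hapos : ∀ t, 0 < a t)
    (heq1 : ∀ t, 3 * (deriv (deriv a) t / a t)
      = -(4 * Real.pi * G) * (ε t + 3 * p t) + Λ + Q t + P t)
    (heq2 : ∀ t, 3 * (deriv a t / a t) ^ 2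
      = 8 * Real.pi * G * ε t + Λ - Q t / 2 - W t / 2) :
    ∀ t, deriv Q t + 6 * (deriv a t / a t) * Q t
        + deriv W t + 2 * (deriv a t / a t) * W t
        + 4 * (deriv a t / a t) * P t
      = 16 * Real.pi * G * (deriv ε t + 3 * (deriv a t / a t) * (ε t + p t)) := by
  intro t
  have hdot :=
    deriv_hamiltonian_constraint G Λ a Q W ε t (ha t) (ha' t) (hQ t) (hW t) (hε t) (hapos t).ne' heq2
  linear_combination 2 * hdot - 4 * (deriv a t / a t) * heq1 t + 4 * (deriv a t / a t) * heq2 t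

/-- The integrability condition: the averaged Raychaudhuri and Hamiltonian
constraint equations imply
`Q' + 6HQ + W' + 2HW + 4HP = 16πG(ε' + 3H(ε+p))` with `H = a'/a`. -/
theorem integrability_condition (G Λ : ℝ) (a Q W P ε p : ℝ → ℝ)
    (ha : Differentiable ℝ a) (ha' : Differentiable ℝ (deriv a))
    (hQ : Differentiable ℝ Q) (hW : Differentiable ℝ W) (hP : Differentiable ℝ P)
    (hε : Differentiable ℝ ε) (hp : Differentiable ℝ p)
    (hapos : ∀ t, 0 < a t)
    (heq1 : ∀ t, 3 * (deriv (deriv a) t / a t)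
      = -(4 * Real.pi * G) * (ε t + 3 * p t) + Λ + Q t + P t)
    (heq2 : ∀ t, 3 * (deriv a t / a t) ^ 2
      = 8 * Real.pi * G * ε t + Λ - Q t / 2 - W t / 2) :
    ∀ t, deriv Q t + 6 * (deriv a t / a t) * Q t
        + deriv W t + 2 * (deriv a t / a t) * W t
        + 4 * (deriv a t / a t) * P t
      = 16 * Real.pi * G * (deriv ε t + 3 * (deriv a t / a t) * (ε t + p t)) :=
  integrability_condition_general G Λ a Q W P ε p ha ha' hQ hW hε hapos heq1 heq2
end

section
/- Suppose Q and W are differentiable functions of t, a > 0 differentiable with a(t₀) = 1, satisfying Q' + 6(a'/a)Q + W' + 2(a'/a)W = 0. Then W(t) = -Q(t) + a(t)⁻²·(W(t₀) + Q(t₀) - 4∫_{t₀}^{t} Q(s)·a(s)·a'(s) ds). -/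
/-! Multiplying the integrability condition by `a²` turns it into the exact derivative
`(a² (Q + W))' = -4 Q a a'`; integrating from `t₀`, where `a = 1`, gives the formula. -/

theorem hasDerivAt_sq_mul_add {a Q W : ℝ → ℝ} {a' Q' W' t : ℝ}
    (ha : HasDerivAt a a' t) (hQ : HasDerivAt Q Q' t) (hW : HasDerivAt W W' t)
    (h : Q' + 6 * (a' / a t) * Q t + W' + 2 * (a' / a t) * W t = 0) :
    HasDerivAt (fun s => a s ^ 2 * (Q s + W s)) (-4 * (Q t * a t * a')) t := by
  refine ((ha.pow 2).mul (hQ.add hW)).congr_deriv ?_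
  have hcancel : a t ^ 2 * (a' / a t) = a t * a' := by grind
  simp only [Pi.add_apply, Pi.pow_apply]
  linear_combination a t ^ 2 * h - (6 * Q t + 2 * W t) * hcancel

/-- Integrated form of the dust integrability condition: if
`Q' + 6(a'/a)Q + W' + 2(a'/a)W = 0` and `a(t₀) = 1`, then
`W(t) = -Q(t) + a(t)⁻²(W(t₀) + Q(t₀) - 4∫_{t₀}^t Q a a')`. -/
theorem integrated_integrability_dust (a Q W : ℝ → ℝ)
    (ha : Differentiable ℝ a) (ha' : Continuous (deriv a))
    (hQ : Differentiable ℝ Q) (hW : Differentiable ℝ W)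
    (hapos : ∀ t, 0 < a t) (t₀ : ℝ) (ha0 : a t₀ = 1)
    (heq : ∀ t, deriv Q t + 6 * (deriv a t / a t) * Q t
        + deriv W t + 2 * (deriv a t / a t) * W t = 0) :
    ∀ t, W t = -Q t + (a t)⁻¹ ^ 2 *
      (W t₀ + Q t₀ - 4 * ∫ s in t₀..t, Q s * a s * deriv a s) := by
  intro t
  have hderiv (s : ℝ) :
      HasDerivAt (fun s => a s ^ 2 * (Q s + W s)) (-4 * (Q s * a s * deriv a s)) s :=
    hasDerivAt_sq_mul_add (ha s).hasDerivAt (hQ s).hasDerivAt (hW s).hasDerivAt (heq s)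
  have hcont : Continuous fun s => -4 * (Q s * a s * deriv a s) :=
    continuous_const.mul ((hQ.continuous.mul ha.continuous).mul ha')
  have hint := intervalIntegral.integral_eq_sub_of_hasDerivAt (fun s _ => hderiv s)
    (hcont.intervalIntegrable t₀ t)
  rw [intervalIntegral.integral_const_mul, ha0] at hint
  have hat : a t ≠ 0 := (hapos t).ne'
  field_simp
  linarith
end
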